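/- Let F be a two-dimensional spectral resolution on the k-perfect MV-algebra M = Γ(ℤ ⋉ G,(k,0)). Then for every i with 1 ≤ i ≤ k and T_i nonempty, the set of characteristic points of T_i has at most k elements, and the set of all characteristic points of F has at most k² elements. -/

import Mathlib

open Function Set

/-- A partially ordered set is Dedekind σ-complete if every monotone increasing
sequence bounded above has a supremum. -/
def DedekindSigmaComplete (G : Type*) [Preorder G] : Prop :=
  ∀ f : ℕ → G, Monotone f → BddAbove (Set.range f) → ∃ g, IsLUB (Set.range f) g

section Lexi

variable {H : Type*} [AddCommGroup H] [LinearOrder H] [IsOrderedAddMonoid H]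
variable {G : Type*} [AddCommGroup G] [Lattice G] [CovariantClass G G (· + ·) (· ≤ ·)]

/-- `u` is a strong unit of `H`. -/
def IsStrongUnit (u : H) : Prop := ∀ h : H, ∃ n : ℕ, 0 < n ∧ h ≤ n • u

/-- The underlying set of the lexicographic MV-algebra `Γ(H ⋉ G, (u,0))`. -/
def MSet (u : H) : Set (H ×ₗ G) := Set.Icc (toLex ((0 : H), (0 : G))) (toLex (u, (0 : G)))

/-- `M_h`: the elements of `M` whose first coordinate is `h`. -/
def MLevel (u h : H) : Set (H ×ₗ G) := {z ∈ MSet (G := G) u | (ofLex z).1 = h}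

/-- A sequence of elements of `M` is summable if all its finite partial sums lie in `M`. -/
def SummableSeq (u : H) (a : ℕ → H ×ₗ G) : Prop := ∀ F : Finset ℕ, ∑ m ∈ F, a m ∈ MSet u

/-- `x` is an `n`-dimensional observable on `Γ(H ⋉ G, (u,0))`. -/
def IsObservable (u : H) (n : ℕ) (x : Set (Fin n → ℝ) → H ×ₗ G) : Prop :=
  (∀ A : Set (Fin n → ℝ), MeasurableSet A → x A ∈ MSet u) ∧
  x Set.univ = toLex (u, (0 : G)) ∧
  ∀ A : ℕ → Set (Fin n → ℝ), (∀ m, MeasurableSet (A m)) → Pairwise (Disjoint on A) →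
    (∀ F : Finset ℕ, ∑ m ∈ F, x (A m) ∈ MSet u) ∧
    IsLUB {y | ∃ F : Finset ℕ, y = ∑ m ∈ F, x (A m)} (x (⋃ m, A m))

/-- The spectral resolution `F_x` of an observable `x`. -/
def specRes {n : ℕ} (x : Set (Fin n → ℝ) → H ×ₗ G) : (Fin n → ℝ) → H ×ₗ G :=
  fun t => x {s | ∀ i, s i < t i}

/-- The increment `V(F,[a,b))`. -/
def boxSum {n : ℕ} (F : (Fin n → ℝ) → H ×ₗ G) (a b : Fin n → ℝ) : H ×ₗ G :=
  ∑ S : Finset (Fin n), ((-1 : ℤ) ^ (n - S.card)) • F (fun i => if i ∈ S then b i else a i)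

/-- `F` is an `n`-dimensional spectral resolution on `Γ(H ⋉ G, (u,0))`. -/
def IsSpectralResolution (u : H) (n : ℕ) (F : (Fin n → ℝ) → H ×ₗ G) : Prop :=
  Monotone F ∧
  IsLUB (Set.range F) (toLex (u, (0 : G))) ∧
  (∀ t : Fin n → ℝ, IsLUB {y | ∃ s : Fin n → ℝ, (∀ i, s i < t i) ∧ y = F s} (F t)) ∧
  (∀ (i : Fin n) (s : Fin n → ℝ),
      IsGLB {y | ∃ r : ℝ, y = F (Function.update s i r)} (toLex ((0 : H), (0 : G)))) ∧
  (∀ a b : Fin n → ℝ, a ≤ b →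
      toLex ((0 : H), (0 : G)) ≤ boxSum F a b ∧ boxSum F a b ≤ toLex (u, (0 : G)))

/-- `T_h = {s ∈ ℝⁿ : F s ∈ M_h}`. -/
def TSet (u : H) {n : ℕ} (F : (Fin n → ℝ) → H ×ₗ G) (h : H) : Set (Fin n → ℝ) :=
  {s | F s ∈ MLevel u h}

/-- The projection `π_j^h(s)`. -/
noncomputable def proj (u : H) {n : ℕ} (F : (Fin n → ℝ) → H ×ₗ G) (h : H)
    (s : Fin n → ℝ) (j : Fin n) : ℝ :=
  sInf {r : ℝ | Function.update s j r ∈ TSet u F h}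

/-- The characteristic point `π_h(s)` associated to `s ∈ T_h`. -/
noncomputable def charPt (u : H) {n : ℕ} (F : (Fin n → ℝ) → H ×ₗ G) (h : H)
    (s : Fin n → ℝ) : Fin n → ℝ :=
  fun j => proj u F h s j

/-- The set of characteristic points of `T_h`. -/
def charPts (u : H) {n : ℕ} (F : (Fin n → ℝ) → H ×ₗ G) (h : H) : Set (Fin n → ℝ) :=
  charPt u F h '' TSet u F h

/-- The set of all characteristic points of `F`. -/
def charPoints (u : H) {n : ℕ} (F : (Fin n → ℝ) → H ×ₗ G) : Set (Fin n → ℝ) :=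
  {p | ∃ h : H, 0 < h ∧ h ≤ u ∧ p ∈ charPts u F h}

/-- A block of some `T_h`, `0 < h ≤ u`. -/
def IsBlock (u : H) {n : ℕ} (F : (Fin n → ℝ) → H ×ₗ G) (C : Set (Fin n → ℝ)) : Prop :=
  ∃ h : H, 0 < h ∧ h ≤ u ∧ ∃ s ∈ TSet u F h,
    C = {t ∈ TSet u F h | charPt u F h t = charPt u F h s}

/-- A `T_0`-adjoined block. -/
def IsT0AdjBlock (u : H) {n : ℕ} (F : (Fin n → ℝ) → H ×ₗ G) (C : Set (Fin n → ℝ)) : Prop :=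
  ∃ h : H, 0 < h ∧ h ≤ u ∧ (∃ s ∈ TSet u F h,
    C = {t ∈ TSet u F h | charPt u F h t = charPt u F h s}) ∧
    ∀ t ∈ C, ∀ j : Fin n, Function.update t j (proj u F h t j) ∈ TSet u F 0

end Lexi

/-!
Write `f x y ∈ ℤ` for the first coordinate of `F ![x, y]`. The axioms of a spectral resolution
make `f` monotone with nonnegative box increments, make it vanish somewhere on every axis-parallel
line and, the first coordinate being discrete, let every value `f x y` be attained strictly to the
lower left of `(x, y)`.

A characteristic point of `T_i = {f = i}` is the lower-left corner of a quadrant on which `f ≥ i`,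
while `f < i` just to its left on the row of any of its witnesses. So distinct characteristic points
of `T_i` form a strict staircase, and the box inequality across each step raises the level by one:
`n` of them force `f ≥ i + n - 1` somewhere, whence `n ≤ k - i + 1 ≤ k`. Summing over `1 ≤ i ≤ k`
gives `k²`.
-/

theorem Set.finite_and_ncard_le_of_forall_finset_card_le {γ : Type*} {s : Set γ} {n : ℕ}
    (h : ∀ t : Finset γ, ↑t ⊆ s → t.card ≤ n) : s.Finite ∧ s.ncard ≤ n := by
  have hs : s.Finite := Set.not_infinite.mp fun hinf => by
    obtain ⟨t, hts, htc⟩ := hinf.exists_subset_card_eq (n + 1)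
    have := h t hts
    omega
  exact ⟨hs, Set.ncard_eq_toFinset_card s hs ▸ h hs.toFinset (by simp)⟩

section LevelFunction

variable {α β : Type*}

/-- The properties of `(x, y) ↦ (ofLex (F ![x, y])).1` for a two-dimensional spectral resolution
`F`; `box_nonneg` is the first coordinate of `0 ≤ V(F, [a, b))`. -/
structure IsLevelFunction [Preorder α] [Preorder β] (f : α → β → ℤ) : Prop where
  mono : ∀ ⦃x x' y y'⦄, x ≤ x' → y ≤ y' → f x y ≤ f x' y'
  box_nonneg : ∀ ⦃x x' y y'⦄, x ≤ x' → y ≤ y' → 0 ≤ f x' y' - f x' y - f x y' + f x y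
  exists_eq_zero_fst : ∀ y, ∃ x, f x y = 0
  exists_eq_zero_snd : ∀ x, ∃ y, f x y = 0
  exists_lt_eq : ∀ x y, ∃ x' < x, ∃ y' < y, f x' y' = f x y

/-- `charFst f i y` and `charSnd f i x` are the coordinates `π_1^i(x, y)` and `π_2^i(x, y)` of the
characteristic point associated to `(x, y) ∈ T_i`. -/
noncomputable def charFst [InfSet α] (f : α → β → ℤ) (i : ℤ) (y : β) : α :=
  sInf {x | f x y = i}

noncomputable def charSnd [InfSet β] (f : α → β → ℤ) (i : ℤ) (x : α) : β :=
  sInf {y | f x y = i}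

def IsCharPoint [InfSet α] [InfSet β] (f : α → β → ℤ) (i : ℤ) (p : α × β) : Prop :=
  ∃ x y, f x y = i ∧ p = (charFst f i y, charSnd f i x)

theorem IsCharPoint.swap [InfSet α] [InfSet β] {f : α → β → ℤ} {i : ℤ} {p : α × β}
    (hp : IsCharPoint f i p) : IsCharPoint (swap f) i p.swap := by
  obtain ⟨x, y, hxy, rfl⟩ := hp
  exact ⟨y, x, hxy, rfl⟩

namespace IsLevelFunction

theorem swap [Preorder α] [Preorder β] {f : α → β → ℤ} (hf : IsLevelFunction f) :
    IsLevelFunction (swap f) where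
  mono _ _ _ _ hy hx := hf.mono hx hy
  box_nonneg _ _ _ _ hy hx := by
    have := hf.box_nonneg hx hy
    simp only [Function.swap]
    omega
  exists_eq_zero_fst := hf.exists_eq_zero_snd
  exists_eq_zero_snd := hf.exists_eq_zero_fst
  exists_lt_eq y x := by
    obtain ⟨x', hx', y', hy', h⟩ := hf.exists_lt_eq x y
    exact ⟨y', hy', x', hx', h⟩

variable [ConditionallyCompleteLinearOrder α] [ConditionallyCompleteLinearOrder β]
  {f : α → β → ℤ} (hf : IsLevelFunction f) {i : ℤ}
include hf

theorem bddBelow_setOf_eq (hi : 0 < i) (y : β) : BddBelow {x | f x y = i} := by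
  obtain ⟨x₀, hx₀⟩ := hf.exists_eq_zero_fst y
  refine ⟨x₀, fun x (hx : f x y = i) => le_of_not_gt fun hlt => ?_⟩
  have := hf.mono hlt.le le_rfl (y := y)
  omega

theorem charFst_lt (hi : 0 < i) {x : α} {y : β} (hxy : f x y = i) : charFst f i y < x := by
  obtain ⟨x', hx', y', hy', h⟩ := hf.exists_lt_eq x y
  have hx'y : f x' y = i := le_antisymm (hxy ▸ hf.mono hx'.le le_rfl)
    (hxy ▸ h ▸ hf.mono le_rfl hy'.le)
  exact (csInf_le (hf.bddBelow_setOf_eq hi y) hx'y).trans_lt hx'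

theorem lt_of_lt_charFst (hi : 0 < i) {x r : α} {y : β} (hxy : f x y = i)
    (hr : r < charFst f i y) : f r y < i := by
  refine lt_of_le_of_ne (hxy ▸ hf.mono (hr.trans (hf.charFst_lt hi hxy)).le le_rfl) fun h => ?_
  exact hr.not_ge (csInf_le (hf.bddBelow_setOf_eq hi y) h)

theorem le_of_charFst_lt {x r : α} {y : β} (hxy : f x y = i) (hr : charFst f i y < r) :
    i ≤ f r y := by
  obtain ⟨x', hx' : f x' y = i, hlt⟩ := exists_lt_of_csInf_lt ⟨x, hxy⟩ hr
  exact hx' ▸ hf.mono hlt.le le_rfl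

theorem charSnd_lt (hi : 0 < i) {x : α} {y : β} (hxy : f x y = i) : charSnd f i x < y :=
  hf.swap.charFst_lt hi hxy

theorem le_of_charSnd_lt {x : α} {y r : β} (hxy : f x y = i) (hr : charSnd f i x < r) :
    i ≤ f x r :=
  hf.swap.le_of_charFst_lt hxy hr

theorem le_of_charPoint_lt (hi : 0 < i) {x u : α} {y v : β} (hxy : f x y = i)
    (hu : charFst f i y < u) (hv : charSnd f i x < v) : i ≤ f u v := by
  have h₁ := hf.le_of_charFst_lt hxy (lt_min hu (hf.charFst_lt hi hxy))
  have h₂ := hf.le_of_charSnd_lt hxy (lt_min hv (hf.charSnd_lt hi hxy))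
  have h₃ := hf.box_nonneg (min_le_right u x) (min_le_right v y)
  have h₄ := hf.mono (min_le_left u x) (min_le_left v y)
  omega

theorem le_of_isCharPoint (hi : 0 < i) {p : α × β} (hp : IsCharPoint f i p) {u : α} {v : β}
    (hu : p.1 < u) (hv : p.2 < v) : i ≤ f u v := by
  obtain ⟨x, y, hxy, rfl⟩ := hp
  exact hf.le_of_charPoint_lt hi hxy hu hv

theorem fst_le_of_snd_le [DenselyOrdered α] (hi : 0 < i) {p q : α × β} (hp : IsCharPoint f i p)
    (hq : IsCharPoint f i q) (h : p.2 ≤ q.2) : q.1 ≤ p.1 := by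
  obtain ⟨X, Y, hXY, rfl⟩ := hq
  by_contra! hlt
  obtain ⟨u, hpu, huq⟩ := exists_between hlt
  have := hf.le_of_isCharPoint hi hp hpu (h.trans_lt (hf.charSnd_lt hi hXY))
  have := hf.lt_of_lt_charFst hi hXY huq
  omega

theorem snd_le_of_fst_le [DenselyOrdered β] (hi : 0 < i) {p q : α × β} (hp : IsCharPoint f i p)
    (hq : IsCharPoint f i q) (h : p.1 ≤ q.1) : q.2 ≤ p.2 :=
  hf.swap.fst_le_of_snd_le hi hp.swap hq.swap h

theorem snd_lt_of_fst_lt [DenselyOrdered α] (hi : 0 < i) {p q : α × β} (hp : IsCharPoint f i p)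
    (hq : IsCharPoint f i q) (h : p.1 < q.1) : q.2 < p.2 :=
  lt_of_not_ge fun h' => h.not_ge (hf.fst_le_of_snd_le hi hp hq h')

theorem eq_of_fst_eq [DenselyOrdered β] (hi : 0 < i) {p q : α × β} (hp : IsCharPoint f i p)
    (hq : IsCharPoint f i q) (h : p.1 = q.1) : p = q :=
  Prod.ext h (le_antisymm (hf.snd_le_of_fst_le hi hq hp h.ge) (hf.snd_le_of_fst_le hi hp hq h.le))

variable [DenselyOrdered α] [DenselyOrdered β]

theorem exists_le_of_isCharPoint (hi : 0 < i) {p : α × β} (hp : IsCharPoint f i p) {U : α}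
    {V : β} (hU : p.1 < U) (hV : p.2 < V) : ∃ u ∈ Ioo p.1 U, ∃ v ∈ Ioo p.2 V, f u v ≤ i := by
  obtain ⟨x, y, hxy, rfl⟩ := hp
  obtain ⟨u, hu₁, hu₂⟩ := exists_between (lt_min hU (hf.charFst_lt hi hxy))
  obtain ⟨v, hv₁, hv₂⟩ := exists_between (lt_min hV (hf.charSnd_lt hi hxy))
  exact ⟨u, ⟨hu₁, hu₂.trans_le (min_le_left _ _)⟩, v, ⟨hv₁, hv₂.trans_le (min_le_left _ _)⟩,
    hxy ▸ hf.mono (hu₂.le.trans (min_le_right _ _)) (hv₂.le.trans (min_le_right _ _))⟩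

theorem add_one_le_of_fst_lt (hi : 0 < i) {p q : α × β} (hp : IsCharPoint f i p)
    (hq : IsCharPoint f i q) (h : p.1 < q.1) {U : α} {V : β} (hU : q.1 < U) (hV : p.2 < V) :
    i + 1 ≤ f U V := by
  have hqp := hf.snd_lt_of_fst_lt hi hp hq h
  obtain ⟨X, Y, hXY, rfl⟩ := hq
  obtain ⟨u, hpu, huq⟩ := exists_between h
  obtain ⟨v, hqv, hvp⟩ := exists_between (lt_min hqp (hf.charSnd_lt hi hXY))
  have h₁ := hf.le_of_isCharPoint hi hp hpu hV
  have h₂ := hf.le_of_charPoint_lt hi hXY hU hqv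
  have h₃ := hf.lt_of_lt_charFst hi hXY huq
  have h₄ := hf.mono le_rfl (hvp.le.trans (min_le_right _ _)) (x := u)
  -- `f u v < i ≤ f u V, f U v`, so the box `[u, U] × [v, V]` lifts `f U V` above `i`
  have h₅ := hf.box_nonneg (huq.trans hU).le ((hvp.trans_le (min_le_left _ _)).trans hV).le
  omega

theorem add_card_le (hi : 0 < i) {S : Finset (α × β)} (hS : ∀ p ∈ S, IsCharPoint f i p)
    (hne : S.Nonempty) {U : α} {V : β} (hU : ∀ p ∈ S, p.1 < U) (hV : ∀ p ∈ S, p.2 < V) :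
    i + S.card ≤ f U V + 1 := by
  revert hS hne U V
  refine Finset.induction_on_max_value Prod.fst S
    (fun _ hne => absurd hne Finset.not_nonempty_empty) fun a s has hmax ih hS _ U V hU hV => ?_
  simp only [Finset.mem_insert, forall_eq_or_imp] at hS hU hV
  rw [Finset.card_insert_of_notMem has]
  rcases s.eq_empty_or_nonempty with rfl | hs
  · have := hf.le_of_isCharPoint hi hS.1 hU.1 hV.1
    simp only [Finset.card_empty]
    omega
  obtain ⟨b, hb, hbmax⟩ := s.exists_max_image Prod.fst hs
  have hlt : ∀ p ∈ s, p.1 < a.1 := fun p hp => (hmax p hp).lt_of_ne fun h =>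
    has (hf.eq_of_fst_eq hi (hS.2 p hp) hS.1 h ▸ hp)
  obtain ⟨u, ⟨hbu, huU⟩, v, ⟨hbv, hvV⟩, huv⟩ :=
    hf.exists_le_of_isCharPoint hi (hS.2 b hb) ((hlt b hb).trans hU.1) (hV.2 b hb)
  -- the new point `a` is one step to the right of the rightmost old point `b`
  have h₁ := ih hS.2 hs (fun p hp => (hbmax p hp).trans_lt hbu) hV.2
  have h₂ := hf.add_one_le_of_fst_lt hi (hS.2 b hb) hS.1 (hlt b hb) hU.1 hbv
  have h₃ := hf.box_nonneg huU.le hvV.le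
  push_cast
  omega

theorem finite_and_ncard_le [NoMaxOrder α] [NoMaxOrder β] (hi : 1 ≤ i) {k : ℕ}
    (hk : ∀ x y, f x y ≤ k) :
    {p | IsCharPoint f i p}.Finite ∧ {p | IsCharPoint f i p}.ncard ≤ k := by
  refine Set.finite_and_ncard_le_of_forall_finset_card_le fun t ht => ?_
  rcases t.eq_empty_or_nonempty with rfl | hne
  · simp
  obtain ⟨M, hM⟩ := t.bddAbove
  obtain ⟨U, hU⟩ := exists_gt M.1
  obtain ⟨V, hV⟩ := exists_gt M.2
  have := hf.add_card_le (by omega) ht hne (fun p hp => (hM hp).1.trans_lt hU)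
    (fun p hp => (hM hp).2.trans_lt hV)
  have := hk U V
  omega

end IsLevelFunction

end LevelFunction

section LexLevels

variable {G : Type*} [AddCommGroup G] [PartialOrder G] [AddLeftMono G]

theorem eq_zero_of_forall_le {c : G} (h : ∀ g, g ≤ c) (g : G) : g = 0 := by
  have hle : ∀ g : G, g ≤ 0 := fun g => (add_le_iff_nonpos_right c).mp (h (c + g))
  exact le_antisymm (hle g) (neg_nonpos.mp (hle (-g)))

theorem eq_zero_of_forall_ge {c : G} (h : ∀ g, c ≤ g) (g : G) : g = 0 := by
  have hge : ∀ g : G, 0 ≤ g := fun g => (le_add_iff_nonneg_right c).mp (h (c + g))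
  exact le_antisymm (neg_nonneg.mp (hge (-g))) (hge g)

/-- If no element of `S` had first coordinate `(ofLex z).1`, every `toLex ((ofLex z).1, g)` would be
a lower bound of `S`, so `G` would be bounded above, hence trivial, and then
`toLex ((ofLex z).1 + 1, 0)` would be a lower bound above `z`. -/
theorem Prod.Lex.exists_fst_eq_of_isGLB {S : Set (ℤ ×ₗ G)} {z : ℤ ×ₗ G} (hz : IsGLB S z) :
    ∃ s ∈ S, (ofLex s).1 = (ofLex z).1 := by
  by_contra! hne
  have hlt : ∀ s ∈ S, (ofLex z).1 < (ofLex s).1 := fun s hs =>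
    (Prod.Lex.monotone_fst _ _ (hz.1 hs)).lt_of_ne (hne s hs).symm
  have hG : ∀ g : G, g = 0 := eq_zero_of_forall_le fun g =>
    ((Prod.Lex.le_iff.mp (hz.2 fun s hs => Prod.Lex.le_iff.mpr (.inl (hlt s hs)) :
      toLex ((ofLex z).1, g) ≤ z)).resolve_left (lt_irrefl _)).2
  have hsucc : toLex ((ofLex z).1 + 1, (0 : G)) ≤ z := hz.2 fun s hs => by
    rcases (Int.add_one_le_of_lt (hlt s hs)).lt_or_eq with h | h
    · exact Prod.Lex.le_iff.mpr (.inl h)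
    · exact Prod.Lex.le_iff.mpr (.inr ⟨h, (hG _).ge⟩)
  have := Prod.Lex.monotone_fst _ _ hsucc
  simp at this

theorem Prod.Lex.exists_fst_eq_of_isLUB {S : Set (ℤ ×ₗ G)} {z : ℤ ×ₗ G} (hz : IsLUB S z) :
    ∃ s ∈ S, (ofLex s).1 = (ofLex z).1 := by
  by_contra! hne
  have hlt : ∀ s ∈ S, (ofLex s).1 < (ofLex z).1 := fun s hs =>
    (Prod.Lex.monotone_fst _ _ (hz.1 hs)).lt_of_ne (hne s hs)
  have hG : ∀ g : G, g = 0 := eq_zero_of_forall_ge fun g =>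
    ((Prod.Lex.le_iff.mp (hz.2 fun s hs => Prod.Lex.le_iff.mpr (.inl (hlt s hs)) :
      z ≤ toLex ((ofLex z).1, g))).resolve_left (lt_irrefl _)).2
  have hpred : z ≤ toLex ((ofLex z).1 - 1, (0 : G)) := hz.2 fun s hs => by
    rcases (Int.le_sub_one_of_lt (hlt s hs)).lt_or_eq with h | h
    · exact Prod.Lex.le_iff.mpr (.inl h)
    · exact Prod.Lex.le_iff.mpr (.inr ⟨h, (hG _).le⟩)
  have := Prod.Lex.monotone_fst _ _ hpred
  simp at this

end LexLevels

section SpectralResolution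

variable {G : Type*}

def levelFn (F : (Fin 2 → ℝ) → ℤ ×ₗ G) (x y : ℝ) : ℤ := (ofLex (F ![x, y])).1

theorem fst_ofLex_eq_levelFn (F : (Fin 2 → ℝ) → ℤ ×ₗ G) (s : Fin 2 → ℝ) :
    (ofLex (F s)).1 = levelFn F (s 0) (s 1) := by
  rw [levelFn, ← FinVec.etaExpand_eq s]
  rfl

theorem levelFn_box [AddCommGroup G] (F : (Fin 2 → ℝ) → ℤ ×ₗ G) (x x' y y' : ℝ) :
    (ofLex (boxSum F ![x, y] ![x', y'])).1 =
      levelFn F x' y' - levelFn F x' y - levelFn F x y' + levelFn F x y := by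
  have hU : (Finset.univ : Finset (Finset (Fin 2))) = {∅, {0}, {1}, {0, 1}} := by decide
  have hcorner : ∀ S : Finset (Fin 2), (fun j => if j ∈ S then ![x', y'] j else ![x, y] j) =
      ![if 0 ∈ S then x' else x, if 1 ∈ S then y' else y] := fun S => by
    ext j; fin_cases j <;> rfl
  rw [boxSum, hU, Finset.sum_insert (by decide), Finset.sum_insert (by decide),
    Finset.sum_insert (by decide), Finset.sum_singleton]
  simp only [hcorner]
  simp [levelFn, sub_eq_add_neg, add_comm, add_left_comm, add_assoc]

theorem charPoints_eq_biUnion [AddCommGroup G] [Lattice G] {n : ℕ} (u : ℤ)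
    (F : (Fin n → ℝ) → ℤ ×ₗ G) : charPoints u F = ⋃ h ∈ Finset.Icc 1 u, charPts u F h := by
  ext p
  simp only [charPoints, Set.mem_iUnion, Finset.mem_Icc, exists_prop, and_assoc]
  exact exists_congr fun h => and_congr_left' (by omega)

theorem IsSpectralResolution.mem_MSet {H : Type*} [AddCommGroup H] [LinearOrder H]
    [AddCommGroup G] [Lattice G] {u : H} {n : ℕ} [NeZero n] {F : (Fin n → ℝ) → H ×ₗ G}
    (hF : IsSpectralResolution u n F) (s : Fin n → ℝ) : F s ∈ MSet u := by
  obtain ⟨-, hlub, -, hglb, -⟩ := hF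
  exact ⟨(hglb 0 s).1 ⟨s 0, by rw [update_eq_self]⟩, hlub.1 ⟨s, rfl⟩⟩

variable [AddCommGroup G] [Lattice G] {u : ℤ} {F : (Fin 2 → ℝ) → ℤ ×ₗ G}

theorem IsSpectralResolution.levelFn_le (hF : IsSpectralResolution u 2 F) (x y : ℝ) :
    levelFn F x y ≤ u :=
  Prod.Lex.monotone_fst _ _ (hF.mem_MSet _).2

theorem IsSpectralResolution.mem_TSet_iff (hF : IsSpectralResolution u 2 F) {h : ℤ}
    {s : Fin 2 → ℝ} : s ∈ TSet u F h ↔ levelFn F (s 0) (s 1) = h := by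
  simp [TSet, MLevel, hF.mem_MSet, fst_ofLex_eq_levelFn]

theorem IsSpectralResolution.charPt_eq (hF : IsSpectralResolution u 2 F) (h : ℤ)
    (s : Fin 2 → ℝ) :
    charPt u F h s = ![charFst (levelFn F) h (s 1), charSnd (levelFn F) h (s 0)] := by
  ext j; fin_cases j <;> simp [charPt, proj, charFst, charSnd, hF.mem_TSet_iff]

theorem IsSpectralResolution.charPts_eq_image (hF : IsSpectralResolution u 2 F) (h : ℤ) :
    charPts u F h = (finTwoArrowEquiv ℝ).symm '' {p | IsCharPoint (levelFn F) h p} := by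
  ext q
  simp only [charPts, mem_image, hF.mem_TSet_iff, hF.charPt_eq, finTwoArrowEquiv_symm_apply]
  constructor
  · rintro ⟨s, hs, rfl⟩
    exact ⟨_, ⟨s 0, s 1, hs, rfl⟩, rfl⟩
  · rintro ⟨_, ⟨x, y, hxy, rfl⟩, rfl⟩
    exact ⟨![x, y], hxy, rfl⟩

theorem IsSpectralResolution.isLevelFunction_levelFn [AddLeftMono G]
    (hF : IsSpectralResolution u 2 F) : IsLevelFunction (levelFn F) := by
  obtain ⟨hmono, -, hleft, hglb, hbox⟩ := hF
  have hvec : ∀ {x x' y y' : ℝ}, x ≤ x' → y ≤ y' → (![x, y] : Fin 2 → ℝ) ≤ ![x', y'] :=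
    fun hx hy => by simp [Pi.le_def, Fin.forall_fin_two, hx, hy]
  refine ⟨fun x x' y y' hx hy => Prod.Lex.monotone_fst _ _ (hmono (hvec hx hy)),
    fun x x' y y' hx hy => ?_, fun y => ?_, fun x => ?_, fun x y => ?_⟩
  · have := Prod.Lex.monotone_fst _ _ (hbox _ _ (hvec hx hy)).1
    rwa [levelFn_box] at this
  · obtain ⟨_, ⟨r, rfl⟩, hr⟩ := Prod.Lex.exists_fst_eq_of_isGLB (hglb 0 ![0, y])
    exact ⟨r, by simpa [fst_ofLex_eq_levelFn] using hr⟩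
  · obtain ⟨_, ⟨r, rfl⟩, hr⟩ := Prod.Lex.exists_fst_eq_of_isGLB (hglb 1 ![x, 0])
    exact ⟨r, by simpa [fst_ofLex_eq_levelFn] using hr⟩
  · obtain ⟨_, ⟨s, hs, rfl⟩, h⟩ := Prod.Lex.exists_fst_eq_of_isLUB (hleft ![x, y])
    exact ⟨s 0, by simpa using hs 0, s 1, by simpa using hs 1,
      by simpa [fst_ofLex_eq_levelFn] using h⟩

end SpectralResolution

theorem stmt_14_general {G : Type*}
    [AddCommGroup G] [Lattice G] [CovariantClass G G (· + ·) (· ≤ ·)]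
    (k : ℕ)
    (F : (Fin 2 → ℝ) → ℤ ×ₗ G) (hF : IsSpectralResolution (k : ℤ) 2 F) :
    (∀ i : ℕ, 1 ≤ i → i ≤ k → (TSet (k : ℤ) F (i : ℤ)).Nonempty →
      (charPts (k : ℤ) F (i : ℤ)).Finite ∧ (charPts (k : ℤ) F (i : ℤ)).ncard ≤ k) ∧
    (charPoints (k : ℤ) F).Finite ∧ (charPoints (k : ℤ) F).ncard ≤ k * k := by
  have hlevel : ∀ h : ℤ, 1 ≤ h →
      (charPts (k : ℤ) F h).Finite ∧ (charPts (k : ℤ) F h).ncard ≤ k := fun h hh => by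
    obtain ⟨hfin, hcard⟩ := hF.isLevelFunction_levelFn.finite_and_ncard_le hh hF.levelFn_le
    rw [hF.charPts_eq_image, Set.ncard_image_of_injective _ (Equiv.injective _)]
    exact ⟨hfin.image _, hcard⟩
  refine ⟨fun i hi _ _ => hlevel i (by exact_mod_cast hi), ?_⟩
  rw [charPoints_eq_biUnion]
  refine ⟨(Finset.finite_toSet _).biUnion fun h hh => (hlevel h (Finset.mem_Icc.mp hh).1).1, ?_⟩
  calc _ ≤ ∑ h ∈ Finset.Icc 1 (k : ℤ), (charPts (k : ℤ) F h).ncard :=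
        Finset.set_ncard_biUnion_le _ _
    _ ≤ (Finset.Icc 1 (k : ℤ)).card • k :=
        Finset.sum_le_card_nsmul _ _ _ fun h hh => (hlevel h (Finset.mem_Icc.mp hh).1).2
    _ = k * k := by simp

theorem stmt_14 {G : Type*}
    [AddCommGroup G] [Lattice G] [CovariantClass G G (· + ·) (· ≤ ·)]
    (hG : DedekindSigmaComplete G) (k : ℕ) (hk : 1 ≤ k)
    (F : (Fin 2 → ℝ) → ℤ ×ₗ G) (hF : IsSpectralResolution (k : ℤ) 2 F) :
    (∀ i : ℕ, 1 ≤ i → i ≤ k → (TSet (k : ℤ) F (i : ℤ)).Nonempty →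
      (charPts (k : ℤ) F (i : ℤ)).Finite ∧ (charPts (k : ℤ) F (i : ℤ)).ncard ≤ k) ∧
    (charPoints (k : ℤ) F).Finite ∧ (charPoints (k : ℤ) F).ncard ≤ k * k :=
  stmt_14_general k F hF
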